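/- Let I be a stable monomial ideal in the skew polynomial ring R. The product defined on the skew Eliahou–Kervaire resolution L_•(I) is associative: (e(σ;u) e(τ;v)) e(ρ;w) = e(σ;u) (e(τ;v) e(ρ;w)) for all admissible symbols e(σ;u), e(τ;v), e(ρ;w). -/

import Mathlib

open Finsupp

/-- Exponent vectors of monomials in `n` variables. -/
abbrev NExp (n : ℕ) := Fin n →₀ ℕ

/-- Integer exponent vectors (for Laurent-type arguments of the bicharacter `C`). -/
abbrev ZExp (n : ℕ) := Fin n →₀ ℤ

/-- Canonical inclusion of `ℕ`-exponent vectors into `ℤ`-exponent vectors. -/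
noncomputable def zc {n : ℕ} (a : NExp n) : ZExp n := Finsupp.mapRange (fun (m : ℕ) => (m : ℤ)) (by simp) a

/-- Total degree of a monomial. -/
def wdeg {n : ℕ} (a : NExp n) : ℕ := a.sum fun _ e => e

/-- `maxIdx a` is the 1-based index of the largest variable occurring in `x^a`
(`0` if `a = 0`, i.e. for the monomial `1`). -/
def maxIdx {n : ℕ} (a : NExp n) : ℕ := a.support.sup fun i => (i : ℕ) + 1

/-- `max(u) ≤ min(y)`: every variable occurring in `y` has (1-based) index at least
`maxIdx u`.  (This is vacuously true when `y = 0`, matching `min(1) = +∞`.) -/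
def maxLeMin {n : ℕ} (u y : NExp n) : Prop := ∀ j ∈ y.support, maxIdx u ≤ (j : ℕ) + 1

/-- Data exhibiting the ring `R` as the skew polynomial ring `k_q[x_1,…,x_n]`:
the monomials `x^a` form a `k`-basis, multiply according to the alternating
bicharacter `C`, and `C` is induced by the defining constants `q i j` with
`x_i x_j = q i j • (x_j x_i)`. -/
structure SkewPoly (k R : Type*) [CommRing k] [Ring R] [Algebra k R] (n : ℕ) : Type _ where
  /-- the monomial `x^a` -/
  mon : NExp n → R
  /-- the bicharacter `C`, defined by `x^a x^b = C(x^a,x^b) x^{a+b}` -/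
  C : ZExp n → ZExp n → kˣ
  /-- the defining constants `q_{i,j}` -/
  q : Fin n → Fin n → kˣ
  q_diag : ∀ i, q i i = 1
  q_symm : ∀ i j, q j i = (q i j)⁻¹
  /-- the monomials form a `k`-basis of `R` -/
  basis : Module.Basis (NExp n) k R
  basis_eq : ∀ a, basis a = mon a
  mon_zero : mon 0 = 1
  mon_mul : ∀ a b, mon a * mon b = ((C (zc a) (zc b) : kˣ) : k) • mon (a + b)
  C_add_left : ∀ a b c, C (a + b) c = C a c * C b c
  C_add_right : ∀ a b c, C a (b + c) = C a b * C a c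
  C_single : ∀ i j : Fin n,
    C (Finsupp.single i 1) (Finsupp.single j 1) = if j < i then q i j else 1

namespace SkewPoly

variable {k R : Type*} [CommRing k] [Ring R] [Algebra k R] {n : ℕ}

/-- The bicharacter `χ(a,b) = C(a,b)/C(b,a)`, so that `x^a x^b = χ(x^a,x^b) x^b x^a`. -/
def chi (S : SkewPoly k R n) (a b : ZExp n) : kˣ := S.C a b * (S.C b a)⁻¹

/-- The set of exponent vectors of the monomials lying in the right ideal `I`. -/
def monSet (S : SkewPoly k R n) (I : Submodule Rᵐᵒᵖ R) : Set (NExp n) :=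
  {w | S.mon w ∈ I}

/-- `I` is a monomial (right) ideal: it is generated by a set of monomials. -/
def IsMonomialIdeal (S : SkewPoly k R n) (I : Submodule Rᵐᵒᵖ R) : Prop :=
  ∃ T : Set (NExp n), I = Submodule.span Rᵐᵒᵖ (S.mon '' T)

/-- `I` is stable: for every monomial `w ∈ I` and every index `i < max(w)`,
the monomial `(x_i * w)/x_{max(w)}` lies in `I`. -/
def IsStable (S : SkewPoly k R n) (I : Submodule Rᵐᵒᵖ R) : Prop :=
  ∀ w ∈ S.monSet I, ∀ i m : Fin n, (m : ℕ) + 1 = maxIdx w → i < m →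
    w + Finsupp.single i 1 - Finsupp.single m 1 ∈ S.monSet I

/-- The canonical (minimal) monomial generating set `G(I)`: monomials of `I` that are
not proper multiples of other monomials of `I`. -/
def G (S : SkewPoly k R n) (I : Submodule Rᵐᵒᵖ R) : Set (NExp n) :=
  {u | u ∈ S.monSet I ∧ ∀ v ∈ S.monSet I, v ≤ u → v = u}

/-- `g` is the decomposition function of the stable ideal `I`: it sends a monomial
`w ∈ I` to the generator `u ∈ G(I)` of its canonical decomposition `w = u * y`,
`max(u) ≤ min(y)`. -/
def IsDecompFun (S : SkewPoly k R n) (I : Submodule Rᵐᵒᵖ R)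
    (g : NExp n → NExp n) : Prop :=
  ∀ w ∈ S.monSet I, g w ∈ S.G I ∧ g w ≤ w ∧ maxLeMin (g w) (w - g w)

end SkewPoly

section Complex

open Finsupp

/-- Symbols `e(i_1,…,i_q; u)`: a list of variable indices together with a monomial. -/
abbrev EKSym (n : ℕ) := List (Fin n) × NExp n

/-- The exponent vector of `x_σ = x_{i_1} ⋯ x_{i_q}`. -/
noncomputable def listMon {n : ℕ} (σ : List (Fin n)) : NExp n :=
  (σ.map fun i => Finsupp.single i 1).sum

variable {k R : Type*} [CommRing k] [Ring R] [Algebra k R] {n : ℕ}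

/-- Right action of `R` on the free right `R`-module `EKSym n →₀ R`. -/
noncomputable def rmul (f : EKSym n →₀ R) (r : R) : EKSym n →₀ R :=
  f.mapRange (· * r) (zero_mul r)

/-- A symbol `e(i_1,…,i_q;u)` is admissible for `I` when `u ∈ G(I)` and
`1 ≤ i_1 < ⋯ < i_q < max(u)`. -/
def Adm (S : SkewPoly k R n) (I : Submodule Rᵐᵒᵖ R) (s : EKSym n) : Prop :=
  s.1.Pairwise (· < ·) ∧ s.2 ∈ S.G I ∧ ∀ i ∈ s.1, (i : ℕ) + 1 < maxIdx s.2

/-- The value of the differential `D` of the big complex `K_•(I)` on the symbol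
`e(σ;u)`:
`D e(σ;u) = Σ_r (−1)^r e(σ_r;u) C(x_{σ_r}*u, x_{i_r})⁻¹ x_{i_r}
          − Σ_r (−1)^r e(σ_r;u_r) C(x_{σ_r}, y_r)⁻¹ y_r`,
where `u_r = g(x_{i_r} * u)` and `y_r = (x_{i_r} * u)/u_r`. -/
noncomputable def Dsym (S : SkewPoly k R n) (g : NExp n → NExp n) (s : EKSym n) :
    EKSym n →₀ R :=
  ∑ r : Fin s.1.length,
    ((-1 : k) ^ ((r : ℕ) + 1)) •
      (Finsupp.single (s.1.eraseIdx (r : ℕ), s.2)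
          ((((S.C (zc (listMon (s.1.eraseIdx (r : ℕ)) + s.2))
              (Finsupp.single (s.1.get r) (1 : ℤ)))⁻¹ : kˣ) : k) •
            S.mon (Finsupp.single (s.1.get r) 1))
       - Finsupp.single (s.1.eraseIdx (r : ℕ), g (Finsupp.single (s.1.get r) 1 + s.2))
          ((((S.C (zc (listMon (s.1.eraseIdx (r : ℕ))))
              (zc (Finsupp.single (s.1.get r) 1 + s.2
                    - g (Finsupp.single (s.1.get r) 1 + s.2))))⁻¹ : kˣ) : k) •
            S.mon (Finsupp.single (s.1.get r) 1 + s.2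
                    - g (Finsupp.single (s.1.get r) 1 + s.2))))

/-- The differential `D : K_•(I) → K_•(I)` extended right-`R`-linearly. -/
noncomputable def Dfun (S : SkewPoly k R n) (g : NExp n → NExp n)
    (f : EKSym n →₀ R) : EKSym n →₀ R :=
  f.sum fun s r => rmul (Dsym S g s) r

open scoped Classical in
/-- The value of the Eliahou–Kervaire differential `d` of `L_•(I)` on `e(σ;u)`:
as for `D`, but the second sum is restricted to `A(σ;u)`, i.e. to those `r` for
which `e(σ_r;u_r)` is admissible. -/
noncomputable def dsym (S : SkewPoly k R n) (I : Submodule Rᵐᵒᵖ R)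
    (g : NExp n → NExp n) (s : EKSym n) : EKSym n →₀ R :=
  ∑ r : Fin s.1.length,
    ((-1 : k) ^ ((r : ℕ) + 1)) •
      (Finsupp.single (s.1.eraseIdx (r : ℕ), s.2)
          ((((S.C (zc (listMon (s.1.eraseIdx (r : ℕ)) + s.2))
              (Finsupp.single (s.1.get r) (1 : ℤ)))⁻¹ : kˣ) : k) •
            S.mon (Finsupp.single (s.1.get r) 1))
       - if Adm S I (s.1.eraseIdx (r : ℕ), g (Finsupp.single (s.1.get r) 1 + s.2)) then
          Finsupp.single (s.1.eraseIdx (r : ℕ), g (Finsupp.single (s.1.get r) 1 + s.2))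
          ((((S.C (zc (listMon (s.1.eraseIdx (r : ℕ))))
              (zc (Finsupp.single (s.1.get r) 1 + s.2
                    - g (Finsupp.single (s.1.get r) 1 + s.2))))⁻¹ : kˣ) : k) •
            S.mon (Finsupp.single (s.1.get r) 1 + s.2
                    - g (Finsupp.single (s.1.get r) 1 + s.2)))
         else 0)

/-- The Eliahou–Kervaire differential `d : L_•(I) → L_•(I)` extended
right-`R`-linearly. -/
noncomputable def dfun (S : SkewPoly k R n) (I : Submodule Rᵐᵒᵖ R)
    (g : NExp n → NExp n) (f : EKSym n →₀ R) : EKSym n →₀ R :=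
  f.sum fun s r => rmul (dsym S I g s) r

open scoped Classical in
/-- The augmentation `ε : L_0(I) → R`, `e(∅;u) ↦ u`. -/
noncomputable def epsfun (S : SkewPoly k R n) (f : EKSym n →₀ R) : R :=
  f.sum fun s r => if s.1 = [] then S.mon s.2 * r else 0

/-- Membership in the subcomplex `J`: the last index satisfies `i_q ≥ max(u)`. -/
def JSym {n : ℕ} (s : EKSym n) : Prop :=
  ∃ m : Fin n, s.1.getLast? = some m ∧ maxIdx s.2 ≤ (m : ℕ) + 1

/-- Two integer exponent vectors have the same `G`-degree. -/
def GdegEq (S : SkewPoly k R n) (a b : ZExp n) : Prop := ∀ c, S.chi a c = S.chi b c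

end Complex

section DG

open Finsupp

variable {k R : Type*} [CommRing k] [Ring R] [Algebra k R] {n : ℕ}

/-- `inv(σ,τ) = #{(i,j) ∈ σ × τ | j < i}`. -/
def invCount {n : ℕ} (σ τ : List (Fin n)) : ℕ :=
  (σ.map fun i => (τ.filter fun j => decide (j < i)).length).sum

open scoped Classical in
/-- The product `e(σ;u) · e(τ;v)` on the skew Eliahou–Kervaire resolution:
`0` if `σ` and `τ` share an index, and otherwise
`(−1)^{inv(σ,τ)} e(σ*τ; g(u*v)) χ(u,x_τ) C(x_σ,x_τ) C(u,v) C(x_σ, g(u*v)/u)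
C(x_τ, g(u*v)/v) · (u*v)/g(u*v)`, where a symbol whose largest index is
`≥ max` of its monomial is interpreted as `0`. -/
noncomputable def psym (S : SkewPoly k R n) (I : Submodule Rᵐᵒᵖ R)
    (g : NExp n → NExp n) (s t : EKSym n) : EKSym n →₀ R :=
  if s.1.Disjoint t.1 ∧
      Adm S I (List.insertionSort (· ≤ ·) (s.1 ++ t.1), g (s.2 + t.2)) then
    (((-1 : k) ^ invCount s.1 t.1) *
      ((S.chi (zc s.2) (zc (listMon t.1)) : kˣ) : k) *
      ((S.C (zc (listMon s.1)) (zc (listMon t.1)) : kˣ) : k) *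
      ((S.C (zc s.2) (zc t.2) : kˣ) : k) *
      ((S.C (zc (listMon s.1)) (zc (g (s.2 + t.2)) - zc s.2) : kˣ) : k) *
      ((S.C (zc (listMon t.1)) (zc (g (s.2 + t.2)) - zc t.2) : kˣ) : k)) •
    Finsupp.single (List.insertionSort (· ≤ ·) (s.1 ++ t.1), g (s.2 + t.2))
      (S.mon (s.2 + t.2 - g (s.2 + t.2)))
  else 0

/-- The product on `L_•(I)` extended to arbitrary elements: coefficients are moved
past basis symbols using the bimodule rule `r · e = χ(r, e) e · r` (monomial by
monomial on the `G`-homogeneous components of the coefficient). -/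
noncomputable def lmul (S : SkewPoly k R n) (I : Submodule Rᵐᵒᵖ R)
    (g : NExp n → NExp n) (f h : EKSym n →₀ R) : EKSym n →₀ R :=
  f.sum fun s r => h.sum fun t r' =>
    rmul (psym S I g s t)
      (((S.basis.repr r).sum fun a c =>
        c • (((S.chi (zc a) (zc (listMon t.1) + zc t.2) : kˣ) : k) • S.mon a)) * r')

/-- `f` is bihomogeneous of homological degree `q` (and some internal degree):
all symbols in its support have length `q`, and all underlying monomials have the
same total internal degree. -/
def Bihom (S : SkewPoly k R n) (f : EKSym n →₀ R) (q : ℕ) : Prop :=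
  (∀ s ∈ f.support, s.1.length = q) ∧
  ∃ dZ : ℕ, ∀ s ∈ f.support, ∀ a ∈ (S.basis.repr (f s)).support,
    wdeg a + s.1.length + wdeg s.2 = dZ

/-- `f` is trihomogeneous of homological degree `q`: bihomogeneous and moreover
`G`-homogeneous. -/
def Trihom (S : SkewPoly k R n) (f : EKSym n →₀ R) (q : ℕ) : Prop :=
  Bihom S f q ∧
  ∃ c : ZExp n, ∀ s ∈ f.support, ∀ a ∈ (S.basis.repr (f s)).support,
    GdegEq S (zc a + zc (listMon s.1) + zc s.2) c

end DG

/-!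
Both bracketings of `e(σ;u) e(τ;v) e(ρ;w)` are either zero or a scalar times the symbol
`e(σ*τ*ρ; g(u*v*w))` times a monomial. By minimality of the generators, the decomposition function
satisfies `g(g(u*v)*w) = g(u*v*w) = g(u*g(v*w))` and `max g(u*v*w) ≤ max g(u*v), max g(v*w)`;
hence the two bracketings produce the same symbol, are nonzero under the same admissibility
condition, and leave the same monomial `(u*v*w)/g(u*v*w)`. Written additively the bicharacter `C`
is bilinear, and the two scalars agree by a linear identity whose only non-formal input is
`C(g(m), m/g(m)) = 1`: every variable of `m/g(m)` comes after every variable of `g(m)`.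
-/

section Exponents

variable {n : ℕ}

lemma zc_apply (a : NExp n) (i : Fin n) : zc a i = (a i : ℤ) := rfl

lemma zc_zero : zc (0 : NExp n) = 0 := by
  ext i; simp [zc_apply]

lemma zc_add (a b : NExp n) : zc (a + b) = zc a + zc b := by
  ext i; simp [zc_apply]

lemma zc_sub {a b : NExp n} (h : b ≤ a) : zc (a - b) = zc a - zc b := by
  ext i
  simp [zc_apply, Nat.cast_sub (h i)]

lemma support_zc (a : NExp n) : (zc a).support = a.support := by
  ext i; simp [zc_apply]

lemma le_maxIdx {a : NExp n} {j : Fin n} (h : a j ≠ 0) : (j : ℕ) + 1 ≤ maxIdx a :=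
  Finset.le_sup (f := fun i : Fin n => (i : ℕ) + 1) (Finsupp.mem_support_iff.mpr h)

lemma eq_zero_of_maxIdx_lt {a : NExp n} {j : Fin n} (h : maxIdx a < (j : ℕ) + 1) : a j = 0 := by
  by_contra hj
  exact absurd (le_maxIdx hj) (not_le.mpr h)

lemma maxLeMin.eq_zero {u y : NExp n} (h : maxLeMin u y) {j : Fin n}
    (hj : (j : ℕ) + 1 < maxIdx u) : y j = 0 := by
  by_contra hy
  exact absurd (h j (Finsupp.mem_support_iff.mpr hy)) (not_le.mpr hj)

lemma maxLeMin.add {u a b : NExp n} (ha : maxLeMin u a) (hb : maxLeMin u b) :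
    maxLeMin u (a + b) := by
  intro j hj
  rcases Nat.eq_zero_or_pos (a j) with h | h
  · exact hb j (by simpa [h] using hj)
  · exact ha j (Finsupp.mem_support_iff.mpr h.ne')

lemma maxLeMin.mono {u u' y : NExp n} (hy : maxLeMin u y) (h : maxIdx u' ≤ maxIdx u) :
    maxLeMin u' y :=
  fun j hj => h.trans (hy j hj)

lemma le_of_add_eq_of_maxLeMin {u y u' y' : NExp n} (he : u + y = u' + y')
    (hy' : maxLeMin u' y') (htop : ∀ j : Fin n, maxIdx u' ≤ (j : ℕ) + 1 → u j ≤ u' j) :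
    u ≤ u' := by
  intro j
  by_cases hj : maxIdx u' ≤ (j : ℕ) + 1
  · exact htop j hj
  · have := DFunLike.congr_fun he j
    simp only [Finsupp.add_apply, hy'.eq_zero (not_le.mp hj)] at this
    omega

end Exponents

section Lists

lemma List.insertionSort_eq_of_perm {α : Type*} [LinearOrder α] {l l' : List α}
    (h : l.Perm l') : l.insertionSort (· ≤ ·) = l'.insertionSort (· ≤ ·) :=
  List.Perm.eq_of_pairwise' (List.pairwise_insertionSort _ _) (List.pairwise_insertionSort _ _)
    ((List.perm_insertionSort _ _).trans (h.trans (List.perm_insertionSort _ _).symm))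

lemma List.Nodup.pairwise_lt_insertionSort {α : Type*} [LinearOrder α] {l : List α}
    (h : l.Nodup) : (l.insertionSort (· ≤ ·)).Pairwise (· < ·) :=
  (List.sortedLE_insertionSort.sortedLT_of_nodup
    ((List.perm_insertionSort _ _).nodup_iff.mpr h)).pairwise

variable {n : ℕ}

lemma listMon_append (σ τ : List (Fin n)) : listMon (σ ++ τ) = listMon σ + listMon τ := by
  simp [listMon]

lemma listMon_insertionSort (l : List (Fin n)) :
    listMon (l.insertionSort (· ≤ ·)) = listMon l :=
  ((List.perm_insertionSort _ _).map _).sum_eq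

lemma invCount_append_left (σ σ' τ : List (Fin n)) :
    invCount (σ ++ σ') τ = invCount σ τ + invCount σ' τ := by
  simp [invCount]

lemma invCount_append_right (σ τ τ' : List (Fin n)) :
    invCount σ (τ ++ τ') = invCount σ τ + invCount σ τ' := by
  induction σ with
  | nil => rfl
  | cons a σ ih =>
    simp only [invCount, List.map_cons, List.sum_cons, List.filter_append,
      List.length_append] at *
    omega

lemma invCount_perm_left {σ σ' : List (Fin n)} (τ : List (Fin n)) (h : σ.Perm σ') :
    invCount σ τ = invCount σ' τ :=
  (h.map _).sum_eq

lemma invCount_perm_right (σ : List (Fin n)) {τ τ' : List (Fin n)} (h : τ.Perm τ') :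
    invCount σ τ = invCount σ τ' := by
  simp only [invCount, (h.filter _).length_eq]

end Lists

namespace SkewPoly

variable {k R : Type*} [CommRing k] [Ring R] [Algebra k R] {n : ℕ}

section Bicharacter

variable (S : SkewPoly k R n)

noncomputable def bilin : ZExp n →+ ZExp n →+ Additive kˣ :=
  AddMonoidHom.mk'
    (fun a => AddMonoidHom.mk' (fun b => Additive.ofMul (S.C a b))
      fun b c => by rw [S.C_add_right, ofMul_mul])
    fun a b => AddMonoidHom.ext fun c => congrArg Additive.ofMul (S.C_add_left a b c)

lemma ofMul_C (a b : ZExp n) : Additive.ofMul (S.C a b) = S.bilin a b := rfl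

lemma chi_zero_left (b : ZExp n) : S.chi 0 b = 1 := by
  apply Additive.ofMul.injective
  simp [chi, ofMul_C]

lemma C_eq_one_of_support_le {x y : ZExp n}
    (h : ∀ i ∈ x.support, ∀ j ∈ y.support, i ≤ j) : S.C x y = 1 := by
  apply Additive.ofMul.injective
  rw [ofMul_C, ofMul_one, ← x.sum_single, ← y.sum_single]
  simp only [Finsupp.sum, map_sum, AddMonoidHom.finsetSum_apply]
  refine Finset.sum_eq_zero fun j hj => Finset.sum_eq_zero fun i hi => ?_
  rw [← Finsupp.smul_single_one i (x i), ← Finsupp.smul_single_one j (y j), map_zsmul,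
    map_zsmul, AddMonoidHom.zsmul_apply, ← ofMul_C, S.C_single,
    if_neg (not_lt.mpr (h i hi j hj))]
  simp

lemma C_eq_one_of_maxLeMin {a b : NExp n} (h : maxLeMin a b) : S.C (zc a) (zc b) = 1 := by
  refine S.C_eq_one_of_support_le fun i hi j hj => ?_
  rw [support_zc] at hi hj
  exact Fin.le_def.mpr (Nat.le_of_succ_le_succ
    ((le_maxIdx (Finsupp.mem_support_iff.mp hi)).trans (h j hj)))

lemma smul_mon_mul_smul_mon (c d : k) (x y : NExp n) :
    (c • S.mon x) * (d • S.mon y) = (c * (d * S.C (zc x) (zc y))) • S.mon (x + y) := by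
  rw [smul_mul_assoc, mul_smul_comm, S.mon_mul, smul_smul, smul_smul, mul_assoc]

/-- The unit part of the coefficient of `e(σ;u) e(τ;v)`, where `a = u`, `b = x_σ`, `a' = v`,
`b' = x_τ` and `P = g(u*v)`. -/
noncomputable def mulUnit (a b a' b' P : ZExp n) : kˣ :=
  S.chi a b' * S.C b b' * S.C a a' * S.C b (P - a) * S.C b' (P - a')

noncomputable def mulCoeff (g : NExp n → NExp n) (s t : EKSym n) : k :=
  (-1) ^ invCount s.1 t.1 *
    S.mulUnit (zc s.2) (zc (listMon s.1)) (zc t.2) (zc (listMon t.1)) (zc (g (s.2 + t.2)))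

/-- The two sides are the unit parts of the coefficients of `(e(σ;u) e(τ;v)) e(ρ;w)` and
`e(σ;u) (e(τ;v) e(ρ;w))`, with `aᵢ = u, v, w`, `bᵢ = x_σ, x_τ, x_ρ`, `P = g(u*v)`, `Q = g(v*w)`,
`W = g(u*v*w)`; the `χ` factor comes from moving `(u*v)/P` past `e(ρ;w)`. -/
lemma mulUnit_assoc (a₁ a₂ a₃ b₁ b₂ b₃ P Q W : ZExp n)
    (hP : S.C P (a₁ + a₂ - P) = 1) (hQ : S.C Q (a₂ + a₃ - Q) = 1)
    (hWP : S.C W (a₁ + a₂ - P) = 1) (hWQ : S.C W (a₂ + a₃ - Q) = 1) :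
    S.mulUnit P (b₁ + b₂) a₃ b₃ W * (S.mulUnit a₁ b₁ a₂ b₂ P * S.chi (a₁ + a₂ - P) (b₃ + a₃)) *
        S.C (P + a₃ - W) (a₁ + a₂ - P) =
      S.mulUnit a₁ b₁ Q (b₂ + b₃) W * S.mulUnit a₂ b₂ a₃ b₃ Q *
        S.C (a₁ + Q - W) (a₂ + a₃ - Q) := by
  apply Additive.ofMul.injective
  replace hP := congrArg Additive.ofMul hP
  replace hQ := congrArg Additive.ofMul hQ
  replace hWP := congrArg Additive.ofMul hWP
  replace hWQ := congrArg Additive.ofMul hWQ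
  simp only [mulUnit, chi, ofMul_mul, ofMul_inv, ofMul_one, ofMul_C, map_add, map_sub,
    AddMonoidHom.add_apply, AddMonoidHom.sub_apply] at hP hQ hWP hWQ ⊢
  linear_combination (norm := abel) hP - hQ - hWP + hWQ

end Bicharacter

section Decomposition

variable {S : SkewPoly k R n} {I : Submodule Rᵐᵒᵖ R} {g : NExp n → NExp n}

lemma add_mem_monSet_right {u : NExp n} (hu : u ∈ S.monSet I) (a : NExp n) :
    u + a ∈ S.monSet I := by
  have h : S.mon (u + a) = S.mon u * ((((S.C (zc u) (zc a))⁻¹ : kˣ) : k) • S.mon a) := by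
    rw [mul_smul_comm, S.mon_mul, smul_smul, ← Units.val_mul, inv_mul_cancel, Units.val_one,
      one_smul]
  change S.mon (u + a) ∈ I
  rw [h]
  simpa only [MulOpposite.smul_eq_mul_unop, MulOpposite.unop_op] using
    I.smul_mem (MulOpposite.op ((((S.C (zc u) (zc a))⁻¹ : kˣ) : k) • S.mon a)) hu

lemma add_mem_monSet_left {u : NExp n} (a : NExp n) (hu : u ∈ S.monSet I) :
    a + u ∈ S.monSet I :=
  add_comm u a ▸ add_mem_monSet_right hu a

lemma eq_of_add_eq_of_maxLeMin {u y u' y' : NExp n} (hu : u ∈ S.G I) (hu' : u' ∈ S.G I)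
    (hy : maxLeMin u y) (hy' : maxLeMin u' y') (he : u + y = u' + y') : u = u' := by
  wlog hle : maxIdx u ≤ maxIdx u' generalizing u y u' y'
  · exact (this hu' hu hy' hy he.symm (le_of_not_ge hle)).symm
  by_cases htop : ∀ j : Fin n, maxIdx u' ≤ (j : ℕ) + 1 → u j ≤ u' j
  · exact hu'.2 u hu.1 (le_of_add_eq_of_maxLeMin he hy' htop)
  · -- the top variable of `u'` occurs in `u` to a higher power, so `max(u) = max(u')`
    push Not at htop
    obtain ⟨j, hj, hlt⟩ := htop
    have hju : (j : ℕ) + 1 ≤ maxIdx u := le_maxIdx (by omega)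
    refine (hu.2 u' hu'.1 (le_of_add_eq_of_maxLeMin he.symm hy fun i hi => ?_)).symm
    by_cases hij : i = j
    · exact hij ▸ hlt.le
    · have hij' : (i : ℕ) ≠ j := Fin.val_ne_of_ne hij
      rw [eq_zero_of_maxIdx_lt (a := u') (by omega)]
      exact Nat.zero_le _

namespace IsDecompFun

lemma apply_add_of_maxLeMin (hg : S.IsDecompFun I g) {u y : NExp n} (hu : u ∈ S.G I)
    (hy : maxLeMin u y) : g (u + y) = u := by
  obtain ⟨hG, hle, hmin⟩ := hg _ (add_mem_monSet_right hu.1 y)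
  exact eq_of_add_eq_of_maxLeMin hG hu hmin hy (add_tsub_cancel_of_le hle)

lemma maxIdx_apply_add_le (hg : S.IsDecompFun I g) {u : NExp n} (hu : u ∈ S.monSet I)
    (a : NExp n) : maxIdx (g (u + a)) ≤ maxIdx u := by
  obtain ⟨hG, hle, hmin⟩ := hg _ (add_mem_monSet_right hu a)
  by_contra hlt
  push Not at hlt
  have hu_le : u ≤ g (u + a) :=
    le_of_add_eq_of_maxLeMin (add_tsub_cancel_of_le hle).symm hmin fun j hj => by
      rw [eq_zero_of_maxIdx_lt (hlt.trans_le hj)]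
      exact Nat.zero_le _
  exact hlt.ne' (congrArg maxIdx (hG.2 u hu hu_le).symm)

lemma apply_apply_add (hg : S.IsDecompFun I g) {b : NExp n} (hb : b ∈ S.monSet I) (a : NExp n) :
    g (g b + a) = g (b + a) := by
  obtain ⟨hG, hle, hmin⟩ := hg b hb
  obtain ⟨hG', hle', hmin'⟩ := hg _ (add_mem_monSet_right hG.1 a)
  have he : b + a = g (g b + a) + ((g b + a - g (g b + a)) + (b - g b)) := by
    rw [← add_assoc, add_tsub_cancel_of_le hle', add_right_comm, add_tsub_cancel_of_le hle]
  rw [he, hg.apply_add_of_maxLeMin hG' (hmin'.add (hmin.mono (hg.maxIdx_apply_add_le hG.1 a)))]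

lemma apply_add_apply (hg : S.IsDecompFun I g) {b : NExp n} (hb : b ∈ S.monSet I) (a : NExp n) :
    g (a + g b) = g (a + b) := by
  rw [add_comm a, hg.apply_apply_add hb, add_comm]

end IsDecompFun

end Decomposition

end SkewPoly

section Product

open Finsupp SkewPoly

variable {k R : Type*} [CommRing k] [Ring R] [Algebra k R] {n : ℕ}
variable {S : SkewPoly k R n} {I : Submodule Rᵐᵒᵖ R} {g : NExp n → NExp n}

noncomputable def mulSym (g : NExp n → NExp n) (s t : EKSym n) : EKSym n :=
  (List.insertionSort (· ≤ ·) (s.1 ++ t.1), g (s.2 + t.2))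

noncomputable def mulRem (g : NExp n → NExp n) (s t : EKSym n) : NExp n :=
  s.2 + t.2 - g (s.2 + t.2)

def MulAdm (S : SkewPoly k R n) (I : Submodule Rᵐᵒᵖ R) (g : NExp n → NExp n) (s t : EKSym n) :
    Prop :=
  s.1.Disjoint t.1 ∧ Adm S I (mulSym g s t)

lemma mulSym_assoc (hg : S.IsDecompFun I g) (s : EKSym n) {t : EKSym n} (ht : t.2 ∈ S.monSet I)
    (p : EKSym n) : mulSym g (mulSym g s t) p = mulSym g s (mulSym g t p) := by
  refine Prod.ext (List.insertionSort_eq_of_perm ?_) ?_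
  · refine ((List.perm_insertionSort _ _).append_right p.1).trans ?_
    rw [List.append_assoc]
    exact ((List.perm_insertionSort _ _).append_left s.1).symm
  · simp only [mulSym]
    rw [hg.apply_apply_add (add_mem_monSet_left s.2 ht),
      hg.apply_add_apply (add_mem_monSet_right ht p.2), add_assoc]

lemma Adm.of_subset {σ σ' : List (Fin n)} {P W : NExp n} (h : Adm S I (σ', W))
    (hσ : σ.Pairwise (· < ·)) (hP : P ∈ S.G I) (hsub : σ ⊆ σ') (hmax : maxIdx W ≤ maxIdx P) :
    Adm S I (σ, P) :=
  ⟨hσ, hP, fun i hi => (h.2.2 i (hsub hi)).trans_le hmax⟩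

lemma mulAdm_mulSym_left_iff (hg : S.IsDecompFun I g) {s t p : EKSym n} (hs : Adm S I s)
    (ht : Adm S I t) :
    MulAdm S I g s t ∧ MulAdm S I g (mulSym g s t) p ↔
      (s.1.Disjoint t.1 ∧ s.1.Disjoint p.1 ∧ t.1.Disjoint p.1) ∧
        Adm S I (mulSym g (mulSym g s t) p) := by
  have hdisj : (mulSym g s t).1.Disjoint p.1 ↔ s.1.Disjoint p.1 ∧ t.1.Disjoint p.1 :=
    (List.perm_insertionSort _ _).disjoint_left.trans List.disjoint_append_left
  have hP := hg _ (add_mem_monSet_left s.2 ht.2.1.1)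
  constructor
  · rintro ⟨⟨hst, -⟩, hstp, hA⟩
    exact ⟨⟨hst, hdisj.mp hstp⟩, hA⟩
  · rintro ⟨⟨hst, hsp, htp⟩, hA⟩
    refine ⟨⟨hst, hA.of_subset ?_ hP.1 ?_ (hg.maxIdx_apply_add_le hP.1.1 p.2)⟩,
      hdisj.mpr ⟨hsp, htp⟩, hA⟩
    · exact List.Nodup.pairwise_lt_insertionSort
        (List.Nodup.append (hs.1.imp ne_of_lt) (ht.1.imp ne_of_lt) hst)
    · exact fun i hi => (List.mem_insertionSort _).mpr (List.mem_append_left _ hi)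

lemma mulAdm_mulSym_right_iff (hg : S.IsDecompFun I g) {s t p : EKSym n} (ht : Adm S I t)
    (hp : Adm S I p) :
    MulAdm S I g t p ∧ MulAdm S I g s (mulSym g t p) ↔
      (s.1.Disjoint t.1 ∧ s.1.Disjoint p.1 ∧ t.1.Disjoint p.1) ∧
        Adm S I (mulSym g s (mulSym g t p)) := by
  have hdisj : s.1.Disjoint (mulSym g t p).1 ↔ s.1.Disjoint t.1 ∧ s.1.Disjoint p.1 :=
    (List.perm_insertionSort _ _).disjoint_right.trans List.disjoint_append_right
  have hQ := hg _ (add_mem_monSet_right ht.2.1.1 p.2)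
  constructor
  · rintro ⟨⟨htp, -⟩, hstp, hA⟩
    exact ⟨⟨(hdisj.mp hstp).1, (hdisj.mp hstp).2, htp⟩, hA⟩
  · rintro ⟨⟨hst, hsp, htp⟩, hA⟩
    refine ⟨⟨htp, hA.of_subset ?_ hQ.1 ?_ ?_⟩, hdisj.mpr ⟨hst, hsp⟩, hA⟩
    · exact List.Nodup.pairwise_lt_insertionSort
        (List.Nodup.append (ht.1.imp ne_of_lt) (hp.1.imp ne_of_lt) htp)
    · exact fun i hi => (List.mem_insertionSort _).mpr (List.mem_append_right _ hi)
    · simpa only [mulSym, add_comm s.2] using hg.maxIdx_apply_add_le hQ.1.1 s.2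

lemma mulAdm_assoc_iff (hg : S.IsDecompFun I g) {s t p : EKSym n} (hs : Adm S I s)
    (ht : Adm S I t) (hp : Adm S I p) :
    MulAdm S I g s t ∧ MulAdm S I g (mulSym g s t) p ↔
      MulAdm S I g t p ∧ MulAdm S I g s (mulSym g t p) := by
  rw [mulAdm_mulSym_left_iff hg hs ht, mulAdm_mulSym_right_iff hg ht hp,
    mulSym_assoc hg s ht.2.1.1 p]

lemma mulRem_assoc (hg : S.IsDecompFun I g) (s : EKSym n) {t : EKSym n} (ht : t.2 ∈ S.monSet I)
    (p : EKSym n) :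
    mulRem g (mulSym g s t) p + mulRem g s t = mulRem g s (mulSym g t p) + mulRem g t p := by
  obtain ⟨σ, u⟩ := s
  obtain ⟨τ, v⟩ := t
  obtain ⟨ρ, w⟩ := p
  have huv : u + v ∈ S.monSet I := add_mem_monSet_left u ht
  have hvw : v + w ∈ S.monSet I := add_mem_monSet_right ht w
  have hP := (hg _ huv).2.1
  have hQ := (hg _ hvw).2.1
  have hWP := (hg _ (add_mem_monSet_right (hg _ huv).1.1 w)).2.1
  have hWQ := (hg _ (add_mem_monSet_left u (hg _ hvw).1.1)).2.1
  simp only [mulRem, mulSym, hg.apply_apply_add huv, hg.apply_add_apply hvw, ← add_assoc]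
    at hWP hWQ ⊢
  ext j
  have := And.intro (hP j) (And.intro (hQ j) (And.intro (hWP j) (hWQ j)))
  simp only [Finsupp.add_apply, Finsupp.tsub_apply] at this ⊢
  omega

lemma mulCoeff_assoc (hg : S.IsDecompFun I g) (s : EKSym n) {t : EKSym n}
    (ht : t.2 ∈ S.monSet I) (p : EKSym n) :
    S.mulCoeff g (mulSym g s t) p *
        (S.mulCoeff g s t * S.chi (zc (mulRem g s t)) (zc (listMon p.1) + zc p.2) *
          S.C (zc (mulRem g (mulSym g s t) p)) (zc (mulRem g s t))) =
      S.mulCoeff g s (mulSym g t p) *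
        (S.mulCoeff g t p * S.C (zc (mulRem g s (mulSym g t p))) (zc (mulRem g t p))) := by
  obtain ⟨σ, u⟩ := s
  obtain ⟨τ, v⟩ := t
  obtain ⟨ρ, w⟩ := p
  have huv : u + v ∈ S.monSet I := add_mem_monSet_left u ht
  have hvw : v + w ∈ S.monSet I := add_mem_monSet_right ht w
  obtain ⟨hPG, hPle, hPmin⟩ := hg _ huv
  obtain ⟨hQG, hQle, hQmin⟩ := hg _ hvw
  have hW₁ : g (g (u + v) + w) = g (u + v + w) := hg.apply_apply_add huv w
  have hW₂ : g (u + g (v + w)) = g (u + v + w) := by rw [hg.apply_add_apply hvw, add_assoc]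
  have hWPle : g (u + v + w) ≤ g (u + v) + w :=
    hW₁ ▸ (hg _ (add_mem_monSet_right hPG.1 w)).2.1
  have hWQle : g (u + v + w) ≤ u + g (v + w) :=
    hW₂ ▸ (hg _ (add_mem_monSet_left u hQG.1)).2.1
  have hWP : maxIdx (g (u + v + w)) ≤ maxIdx (g (u + v)) :=
    hW₁ ▸ hg.maxIdx_apply_add_le hPG.1 w
  have hWQ : maxIdx (g (u + v + w)) ≤ maxIdx (g (v + w)) := by
    rw [← hW₂, add_comm]
    exact hg.maxIdx_apply_add_le hQG.1 u
  have key := congrArg Units.val (S.mulUnit_assoc (zc u) (zc v) (zc w)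
    (zc (listMon σ)) (zc (listMon τ)) (zc (listMon ρ)) (zc (g (u + v))) (zc (g (v + w)))
    (zc (g (u + v + w)))
    (by rw [← zc_add, ← zc_sub hPle]; exact S.C_eq_one_of_maxLeMin hPmin)
    (by rw [← zc_add, ← zc_sub hQle]; exact S.C_eq_one_of_maxLeMin hQmin)
    (by rw [← zc_add, ← zc_sub hPle]; exact S.C_eq_one_of_maxLeMin (hPmin.mono hWP))
    (by rw [← zc_add, ← zc_sub hQle]; exact S.C_eq_one_of_maxLeMin (hQmin.mono hWQ)))
  simp only [Units.val_mul] at key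
  simp only [mulCoeff, mulSym, mulRem, hW₁, hW₂, listMon_insertionSort, listMon_append,
    invCount_perm_left _ (List.perm_insertionSort _ _),
    invCount_perm_right _ (List.perm_insertionSort _ _), invCount_append_left,
    invCount_append_right, zc_sub hPle, zc_sub hQle, zc_sub hWPle, zc_sub hWQle, zc_add, pow_add]
  linear_combination
    (-1 : k) ^ invCount σ τ * (-1 : k) ^ invCount σ ρ * (-1 : k) ^ invCount τ ρ * key

lemma psym_of_mulAdm {s t : EKSym n} (h : MulAdm S I g s t) :
    psym S I g s t = single (mulSym g s t) (S.mulCoeff g s t • S.mon (mulRem g s t)) := by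
  unfold MulAdm mulSym at h
  rw [psym, if_pos h, smul_single, mulSym, mulRem]
  congr 2
  simp only [mulCoeff, mulUnit, Units.val_mul]
  ring

lemma psym_of_not_mulAdm {s t : EKSym n} (h : ¬MulAdm S I g s t) : psym S I g s t = 0 :=
  if_neg h

lemma rmul_single (a : EKSym n) (x r : R) : rmul (single a x) r = single a (x * r) :=
  mapRange_single

lemma rmul_one (f : EKSym n →₀ R) : rmul f 1 = f := by
  ext; simp [rmul]

lemma rmul_zero (f : EKSym n →₀ R) : rmul f 0 = 0 := by
  ext; simp [rmul]

lemma zero_rmul (r : R) : rmul (0 : EKSym n →₀ R) r = 0 :=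
  mapRange_zero

lemma lmul_zero_left (f : EKSym n →₀ R) : lmul S I g 0 f = 0 :=
  sum_zero_index

lemma lmul_zero_right (f : EKSym n →₀ R) : lmul S I g f 0 = 0 := by
  simp [lmul]

lemma lmul_single_smul_mon_single (s t : EKSym n) (c : k) (y : NExp n) (r : R) :
    lmul S I g (single s (c • S.mon y)) (single t r) =
      rmul (psym S I g s t)
        ((c * S.chi (zc y) (zc (listMon t.1) + zc t.2)) • S.mon y * r) := by
  have hrepr : S.basis.repr (c • S.mon y) = single y c := by
    rw [map_smul, ← S.basis_eq, S.basis.repr_self, smul_single_one]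
  rw [lmul, sum_single_index, sum_single_index, hrepr, sum_single_index, smul_smul] <;>
    simp [rmul_zero]

lemma lmul_single_one_single (s t : EKSym n) (r : R) :
    lmul S I g (single s 1) (single t r) = rmul (psym S I g s t) r := by
  simpa [S.mon_zero, zc_zero, S.chi_zero_left] using
    lmul_single_smul_mon_single (S := S) (I := I) (g := g) s t 1 0 r

lemma lmul_psym_single_eq_zero {s t p : EKSym n}
    (h : ¬(MulAdm S I g s t ∧ MulAdm S I g (mulSym g s t) p)) :
    lmul S I g (psym S I g s t) (single p 1) = 0 := by
  by_cases hst : MulAdm S I g s t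
  · rw [psym_of_mulAdm hst, lmul_single_smul_mon_single,
      psym_of_not_mulAdm fun h' => h ⟨hst, h'⟩, zero_rmul]
  · rw [psym_of_not_mulAdm hst, lmul_zero_left]

lemma lmul_single_psym_eq_zero {s t p : EKSym n}
    (h : ¬(MulAdm S I g t p ∧ MulAdm S I g s (mulSym g t p))) :
    lmul S I g (single s 1) (psym S I g t p) = 0 := by
  by_cases htp : MulAdm S I g t p
  · rw [psym_of_mulAdm htp, lmul_single_one_single,
      psym_of_not_mulAdm fun h' => h ⟨htp, h'⟩, zero_rmul]
  · rw [psym_of_not_mulAdm htp, lmul_zero_right]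

theorem lmul_single_assoc (hg : S.IsDecompFun I g) {s t p : EKSym n} (hs : Adm S I s)
    (ht : Adm S I t) (hp : Adm S I p) :
    lmul S I g (lmul S I g (single s 1) (single t 1)) (single p 1) =
      lmul S I g (single s 1) (lmul S I g (single t 1) (single p 1)) := by
  simp only [lmul_single_one_single, rmul_one]
  by_cases hL : MulAdm S I g s t ∧ MulAdm S I g (mulSym g s t) p
  · obtain ⟨htp, hs_tp⟩ := (mulAdm_assoc_iff hg hs ht hp).mp hL
    rw [psym_of_mulAdm hL.1, lmul_single_smul_mon_single, psym_of_mulAdm hL.2,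
      psym_of_mulAdm htp, lmul_single_one_single, psym_of_mulAdm hs_tp, rmul_single,
      rmul_single, mul_one, smul_mon_mul_smul_mon, smul_mon_mul_smul_mon,
      mulSym_assoc hg s ht.2.1.1 p, mulRem_assoc hg s ht.2.1.1 p, mulCoeff_assoc hg s ht.2.1.1 p]
  · rw [lmul_psym_single_eq_zero hL,
      lmul_single_psym_eq_zero fun h => hL ((mulAdm_assoc_iff hg hs ht hp).mpr h)]

end Product

section Statements

open Finsupp

variable {k R : Type*} [CommRing k] [Ring R] [Algebra k R] {n : ℕ}

theorem stmt17_general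
    (S : SkewPoly k R n) (I : Submodule Rᵐᵒᵖ R)
    (g : NExp n → NExp n) (hg : S.IsDecompFun I g) :
    ∀ s t p : EKSym n, Adm S I s → Adm S I t → Adm S I p →
      lmul S I g (lmul S I g (Finsupp.single s 1) (Finsupp.single t 1))
          (Finsupp.single p 1)
        = lmul S I g (Finsupp.single s 1)
            (lmul S I g (Finsupp.single t 1) (Finsupp.single p 1)) :=
  fun _ _ _ => lmul_single_assoc hg

theorem stmt17 [IsNoetherianRing k]
    (S : SkewPoly k R n) (I : Submodule Rᵐᵒᵖ R)
    (hmono : S.IsMonomialIdeal I) (hstab : S.IsStable I)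
    (g : NExp n → NExp n) (hg : S.IsDecompFun I g) :
    ∀ s t p : EKSym n, Adm S I s → Adm S I t → Adm S I p →
      lmul S I g (lmul S I g (Finsupp.single s 1) (Finsupp.single t 1))
          (Finsupp.single p 1)
        = lmul S I g (Finsupp.single s 1)
            (lmul S I g (Finsupp.single t 1) (Finsupp.single p 1)) :=
  stmt17_general S I g hg

end Statements
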